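/- Let γ : ℤ → ℝ be even (γ(−h) = γ(h)) with ∑_{h=0}^{∞} (1 + h³)·|γ(h)| < ∞, and set Ω = ∑_{h∈ℤ} γ(h). Let K = K(T) be a sequence of positive integers with K(T) → ∞ and K(T)/T → 0. Then (1/T)·∑_{t=1}^{T}∑_{s=1}^{T} [ (1/K)·∑_{ℓ=1}^{K} cos(2πℓ(t−s)/T) ]·γ(t−s) → Ω as T → ∞. -/

import Mathlib

/-!
Grouping the double sum by the lag `h = t - s` turns it into
`∑ₕ (1 - |h|/T)₊ · k_T(h) · γ(h)`, where `k_T(h)` is the average of `cos (2πℓh/T)` over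
`1 ≤ ℓ ≤ K`. Both weights are bounded by `1` and tend to `1` for fixed `h`; for the cosine
average because `1 - cos x ≤ x²/2` gives `|k_T(h) - 1| ≤ (2πhK/T)²/2`. Dominated convergence
with the summable bound `|γ|` concludes.
-/

open Filter Finset Topology

theorem card_filter_sub_eq (T : ℕ) (h : ℤ) :
    #{p ∈ Icc 1 T ×ˢ Icc 1 T | (p.1 : ℤ) - p.2 = h} = T - h.natAbs := by
  rw [← Nat.add_sub_cancel (n := T - h.natAbs) (m := 1), ← Nat.card_Icc, eq_comm]
  apply card_nbij' (fun s => (s + h.toNat, s + (-h).toNat)) (fun p => p.1 - h.toNat)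
  · intro s hs
    simp only [coe_Icc, Set.mem_Icc, coe_filter, mem_product, mem_Icc, Set.mem_ofPred_eq]
      at hs ⊢
    omega
  · intro p hp
    simp only [coe_Icc, Set.mem_Icc, coe_filter, mem_product, mem_Icc, Set.mem_ofPred_eq]
      at hp ⊢
    omega
  · intro s hs
    simp only
    omega
  · intro p hp
    simp only [coe_filter, mem_product, mem_Icc, Set.mem_ofPred_eq] at hp
    ext <;> simp only <;> omega

theorem sum_Icc_sum_Icc_comp_sub {M : Type*} [AddCommMonoid M] [TopologicalSpace M] [T2Space M]
    (T : ℕ) (G : ℤ → M) :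
    ∑ t ∈ Icc 1 T, ∑ s ∈ Icc 1 T, G (t - s) = ∑' h : ℤ, (T - h.natAbs) • G h := by
  classical
  rw [← sum_product', sum_comp (fun h => G h) (fun p : ℕ × ℕ => (p.1 : ℤ) - p.2)]
  rw [tsum_eq_sum (s := (Icc 1 T ×ˢ Icc 1 T).image fun p : ℕ × ℕ => (p.1 : ℤ) - p.2)]
  · simp only [card_filter_sub_eq]
  · intro h hh
    rw [← card_filter_sub_eq, card_eq_zero.mpr, zero_smul]
    exact filter_eq_empty_iff.mpr fun p hp hph => hh (mem_image.mpr ⟨p, hp, hph⟩)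

theorem summable_int_of_even {G : Type*} [AddCommGroup G] [TopologicalSpace G]
    [IsTopologicalAddGroup G] {f : ℤ → G} (heven : ∀ h, f (-h) = f h)
    (hf : Summable fun n : ℕ => f n) : Summable f :=
  .of_nat_of_neg hf (by simpa only [heven] using hf)

theorem tendsto_tsum_mul_of_tendsto_one {α ι R : Type*} [NormedRing R] [CompleteSpace R]
    {l : Filter α} {w : α → ι → R} {f : ι → R} (hf : Summable fun i => ‖f i‖)
    (hw : ∀ i, Tendsto (w · i) l (𝓝 1)) (hw_le : ∀ a i, ‖w a i‖ ≤ 1) :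
    Tendsto (fun a => ∑' i, w a i * f i) l (𝓝 (∑' i, f i)) := by
  refine tendsto_tsum_of_dominated_convergence hf (fun i => ?_) (.of_forall fun a i => ?_)
  · simpa only [one_mul] using (hw i).mul_const (f i)
  · exact (norm_mul_le _ _).trans (mul_le_of_le_one_left (norm_nonneg _) (hw_le a i))

-- Truncated subtraction makes this `(1 - |h|/T)₊`.
noncomputable def bartlettWeight (T : ℕ) (h : ℤ) : ℝ := ((T - h.natAbs : ℕ) : ℝ) / T

theorem bartlettWeight_nonneg (T : ℕ) (h : ℤ) : 0 ≤ bartlettWeight T h := by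
  unfold bartlettWeight; positivity

theorem bartlettWeight_le_one (T : ℕ) (h : ℤ) : bartlettWeight T h ≤ 1 :=
  div_le_one_of_le₀ (mod_cast T.sub_le _) T.cast_nonneg

theorem tendsto_bartlettWeight (h : ℤ) : Tendsto (bartlettWeight · h) atTop (𝓝 1) := by
  have hlim : Tendsto (fun T : ℕ => 1 - (h.natAbs : ℝ) / T) atTop (𝓝 1) := by
    simpa only [sub_zero] using (tendsto_const_nhds (x := (1 : ℝ))).sub
      (tendsto_const_div_atTop_nhds_zero_nat (h.natAbs : ℝ))
  refine hlim.congr' ?_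
  filter_upwards [eventually_gt_atTop h.natAbs] with T hT
  rw [bartlettWeight, Nat.cast_sub hT.le, sub_div, div_self (Nat.cast_ne_zero.mpr (by omega))]

noncomputable def meanCos (K : ℕ) (x : ℝ) : ℝ :=
  (K : ℝ)⁻¹ * ∑ ℓ ∈ Icc 1 K, Real.cos (ℓ * x)

theorem abs_meanCos_le_one (K : ℕ) (x : ℝ) : |meanCos K x| ≤ 1 := by
  rcases K.eq_zero_or_pos with rfl | hK
  · simp [meanCos]
  calc |meanCos K x| ≤ (K : ℝ)⁻¹ * ∑ ℓ ∈ Icc 1 K, |Real.cos (ℓ * x)| := by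
        rw [meanCos, abs_mul, abs_of_pos (by positivity)]
        gcongr
        exact abs_sum_le_sum_abs _ _
    _ ≤ (K : ℝ)⁻¹ * ∑ ℓ ∈ Icc 1 K, 1 := by
        gcongr
        exact Real.abs_cos_le_one _
    _ = 1 := by simp [hK.ne']

theorem abs_meanCos_sub_one_le {K : ℕ} (hK : 0 < K) (x : ℝ) :
    |meanCos K x - 1| ≤ (K * x) ^ 2 / 2 := by
  have hK' : (0 : ℝ) < K := by exact_mod_cast hK
  have hterm : ∀ ℓ ∈ Icc 1 K, |Real.cos (ℓ * x) - 1| ≤ (K * x) ^ 2 / 2 := by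
    intro ℓ hℓ
    have hℓK : (ℓ : ℝ) ≤ K := by exact_mod_cast (mem_Icc.mp hℓ).2
    rw [abs_sub_comm, abs_of_nonneg (sub_nonneg.mpr (Real.cos_le_one _))]
    calc 1 - Real.cos (ℓ * x) ≤ (ℓ * x) ^ 2 / 2 := by
          linarith [Real.one_sub_sq_div_two_le_cos (x := ℓ * x)]
      _ ≤ (K * x) ^ 2 / 2 := by rw [mul_pow, mul_pow]; gcongr
  have hmean :
      meanCos K x - 1 = (K : ℝ)⁻¹ * ∑ ℓ ∈ Icc 1 K, (Real.cos (ℓ * x) - 1) := by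
    simp [meanCos, mul_sub, hK'.ne']
  calc |meanCos K x - 1| = (K : ℝ)⁻¹ * |∑ ℓ ∈ Icc 1 K, (Real.cos (ℓ * x) - 1)| := by
        rw [hmean, abs_mul, abs_of_pos (inv_pos.mpr hK')]
    _ ≤ (K : ℝ)⁻¹ * ∑ ℓ ∈ Icc 1 K, (K * x) ^ 2 / 2 := by
        gcongr
        exact (abs_sum_le_sum_abs _ _).trans (sum_le_sum hterm)
    _ = (K * x) ^ 2 / 2 := by simp [hK'.ne']

theorem tendsto_meanCos_one {α : Type*} {l : Filter α} {K : α → ℕ} {x : α → ℝ}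
    (hK : ∀ a, 0 < K a) (hKx : Tendsto (fun a => K a * x a) l (𝓝 0)) :
    Tendsto (fun a => meanCos (K a) (x a)) l (𝓝 1) := by
  rw [tendsto_iff_norm_sub_tendsto_zero]
  refine squeeze_zero (fun a => norm_nonneg _) (fun a => abs_meanCos_sub_one_le (hK a) _) ?_
  simpa using (hKx.pow 2).div_const 2

theorem one_div_mul_sum_Icc_sum_Icc_eq_tsum (T K : ℕ) (γ : ℤ → ℝ) :
    (1 / (T : ℝ)) * ∑ t ∈ Icc 1 T, ∑ s ∈ Icc 1 T,
      ((1 / (K : ℝ)) * ∑ ℓ ∈ Icc 1 K,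
        Real.cos (2 * Real.pi * ℓ * ((t : ℝ) - (s : ℝ)) / T)) * γ ((t : ℤ) - (s : ℤ)) =
      ∑' h : ℤ, bartlettWeight T h * meanCos K (2 * Real.pi * h / T) * γ h := by
  set G : ℤ → ℝ := fun h => meanCos K (2 * Real.pi * h / T) * γ h
  have hG : ∀ t s : ℕ, ((1 / (K : ℝ)) * ∑ ℓ ∈ Icc 1 K,
      Real.cos (2 * Real.pi * ℓ * ((t : ℝ) - (s : ℝ)) / T)) * γ ((t : ℤ) - (s : ℤ)) =
      G (t - s) := by
    intro t s
    simp only [G, meanCos, one_div, Int.cast_sub, Int.cast_natCast]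
    congr 2
    exact sum_congr rfl fun ℓ _ => by ring_nf
  simp only [hG, sum_Icc_sum_Icc_comp_sub, ← tsum_mul_left]
  congr 1 with h
  simp only [G, bartlettWeight, nsmul_eq_mul]
  ring

theorem shar_wb_kernel_weighted_autocov_tendsto_lrv_general
    (γ : ℤ → ℝ) (heven : ∀ h : ℤ, γ (-h) = γ h)
    (hsum : Summable (fun h : ℕ => (1 + (h : ℝ) ^ 3) * |γ (h : ℤ)|))
    (Ωlrv : ℝ) (hΩ : Ωlrv = ∑' h : ℤ, γ h)
    (K : ℕ → ℕ) (hKpos : ∀ T, 0 < K T)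
    (hKT : Tendsto (fun T : ℕ => (K T : ℝ) / T) atTop (nhds 0)) :
    Tendsto (fun T : ℕ =>
        (1 / (T : ℝ)) * ∑ t ∈ Finset.Icc 1 T, ∑ s ∈ Finset.Icc 1 T,
          ((1 / (K T : ℝ)) * ∑ ℓ ∈ Finset.Icc 1 (K T),
            Real.cos (2 * Real.pi * ℓ * ((t : ℝ) - (s : ℝ)) / T)) * γ ((t : ℤ) - (s : ℤ)))
      atTop (nhds Ωlrv) := by
  have hγ : Summable fun h : ℤ => ‖γ h‖ := by
    refine summable_int_of_even (by simp [heven]) (hsum.of_nonneg_of_le (fun n => abs_nonneg _)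
      fun n => le_mul_of_one_le_left (abs_nonneg _) ?_)
    linarith [pow_nonneg n.cast_nonneg (M₀ := ℝ) 3]
  rw [hΩ]
  refine (tendsto_tsum_mul_of_tendsto_one hγ (fun h => ?_) fun T h => ?_).congr fun T =>
    (one_div_mul_sum_Icc_sum_Icc_eq_tsum T (K T) γ).symm
  · have hKx : Tendsto (fun T : ℕ => (K T : ℝ) * (2 * Real.pi * h / T)) atTop (𝓝 0) := by
      simpa only [mul_zero] using (hKT.const_mul (2 * Real.pi * h)).congr fun T => by ring
    simpa only [mul_one] using (tendsto_bartlettWeight h).mul (tendsto_meanCos_one hKpos hKx)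
  · rw [Real.norm_eq_abs, abs_mul, abs_of_nonneg (bartlettWeight_nonneg T h)]
    exact mul_le_one₀ (bartlettWeight_le_one T h) (abs_nonneg _) (abs_meanCos_le_one _ _)

/-- Deterministic asymptotic unbiasedness of the SHAR-WB long-run variance kernel: if
`γ : ℤ → ℝ` is even with `∑_{h=0}^{∞} (1 + h³)·|γ(h)| < ∞`, `Ω = ∑_{h∈ℤ} γ(h)`, and
`K(T)` are positive integers with `K(T) → ∞` and `K(T)/T → 0`, then
`(1/T)·∑_{t=1}^{T}∑_{s=1}^{T} [(1/K)·∑_{ℓ=1}^{K} cos(2πℓ(t−s)/T)]·γ(t−s) → Ω`. -/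
theorem shar_wb_kernel_weighted_autocov_tendsto_lrv
    (γ : ℤ → ℝ) (heven : ∀ h : ℤ, γ (-h) = γ h)
    (hsum : Summable (fun h : ℕ => (1 + (h : ℝ) ^ 3) * |γ (h : ℤ)|))
    (Ωlrv : ℝ) (hΩ : Ωlrv = ∑' h : ℤ, γ h)
    (K : ℕ → ℕ) (hKpos : ∀ T, 0 < K T)
    (hKinf : Tendsto (fun T : ℕ => (K T : ℝ)) atTop atTop)
    (hKT : Tendsto (fun T : ℕ => (K T : ℝ) / T) atTop (nhds 0)) :
    Tendsto (fun T : ℕ =>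
        (1 / (T : ℝ)) * ∑ t ∈ Finset.Icc 1 T, ∑ s ∈ Finset.Icc 1 T,
          ((1 / (K T : ℝ)) * ∑ ℓ ∈ Finset.Icc 1 (K T),
            Real.cos (2 * Real.pi * ℓ * ((t : ℝ) - (s : ℝ)) / T)) * γ ((t : ℤ) - (s : ℤ)))
      atTop (nhds Ωlrv) :=
  shar_wb_kernel_weighted_autocov_tendsto_lrv_general γ heven hsum Ωlrv hΩ K hKpos hKT
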